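/- Let R be a Jacobi-diagonalizable algebraic curvature tensor on a scalar product space (V, g). Then R is Jacobi-dual if and only if R is weak Jacobi-dual. -/

import Mathlib

/- Common definitions: scalar product space (V, g) with nondegenerate symmetric bilinear
form g, algebraic curvature tensors, Jacobi operators, and derived notions. -/

variable {V : Type*} [AddCommGroup V] [Module ℝ V]

/-- `R` is quadrilinear and satisfies the symmetries of an algebraic curvature tensor. -/
def IsCurv (R : V → V → V → V → ℝ) : Prop :=
  (∀ (a : ℝ) (X X' Y Z W : V), R (a • X + X') Y Z W = a * R X Y Z W + R X' Y Z W) ∧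
  (∀ (a : ℝ) (X Y Y' Z W : V), R X (a • Y + Y') Z W = a * R X Y Z W + R X Y' Z W) ∧
  (∀ (a : ℝ) (X Y Z Z' W : V), R X Y (a • Z + Z') W = a * R X Y Z W + R X Y Z' W) ∧
  (∀ (a : ℝ) (X Y Z W W' : V), R X Y Z (a • W + W') = a * R X Y Z W + R X Y Z W') ∧
  (∀ X Y Z W : V, R X Y Z W = - R Y X Z W) ∧
  (∀ X Y Z W : V, R X Y Z W = - R X Y W Z) ∧
  (∀ X Y Z W : V, R X Y Z W = R Z W X Y) ∧
  (∀ X Y Z W : V, R X Y Z W + R Y Z X W + R Z X Y W = 0)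

/-- `J X` is the Jacobi operator of `R`: the unique linear map with
`g (J X Y) Z = R Y X X Z` for all `Y Z`. -/
def IsJacobi (g : V →ₗ[ℝ] V →ₗ[ℝ] ℝ) (R : V → V → V → V → ℝ) (J : V → V →ₗ[ℝ] V) : Prop :=
  ∀ X Y Z : V, g (J X Y) Z = R Y X X Z

/-- Jacobi-orthogonality: `g (J_X Y) (J_Y X) = 0` for all mutually orthogonal unit `X Y`. -/
def JacobiOrthogonal (g : V →ₗ[ℝ] V →ₗ[ℝ] ℝ) (J : V → V →ₗ[ℝ] V) : Prop :=
  ∀ X Y : V, (g X X = 1 ∨ g X X = -1) → (g Y Y = 1 ∨ g Y Y = -1) → g X Y = 0 →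
    g (J X Y) (J Y X) = 0
/-- Jacobi-duality. -/
def JacobiDual (g : V →ₗ[ℝ] V →ₗ[ℝ] ℝ) (J : V → V →ₗ[ℝ] V) : Prop :=
  ∀ (X Y : V) (l : ℝ), g X X ≠ 0 → J X Y = (g X X * l) • Y → J Y X = (g Y Y * l) • X
/-- Weak Jacobi-duality: duality for mutually orthogonal unit vectors. -/
def WeakJacobiDual (g : V →ₗ[ℝ] V →ₗ[ℝ] ℝ) (J : V → V →ₗ[ℝ] V) : Prop :=
  ∀ (X Y : V) (l : ℝ), (g X X = 1 ∨ g X X = -1) → (g Y Y = 1 ∨ g Y Y = -1) → g X Y = 0 →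
    J X Y = (g X X * l) • Y → J Y X = (g Y Y * l) • X
/-- An endomorphism is diagonalizable iff its eigenspaces span. -/
def IsDiagonalizable (f : V →ₗ[ℝ] V) : Prop :=
  (⨆ μ : ℝ, Module.End.eigenspace f μ) = ⊤

/-- `R` (via its Jacobi operator `J`) is Jacobi-diagonalizable. -/
def JacobiDiagonalizable (g : V →ₗ[ℝ] V →ₗ[ℝ] ℝ) (J : V → V →ₗ[ℝ] V) : Prop :=
  ∀ X : V, g X X ≠ 0 → IsDiagonalizable (J X)

/-! Rescaling, `J (c • X) = c² • J X`, reduces duality to unit `X`. Writing `Y = Z + a X` with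
`Z ⊥ X`, the identity `J (Z + a X) X = J Z X - a • J X Z` and `J X ⊥ X` reduce it further to
eigenvectors `Z ⊥ X` of `J X`, where weak duality (after rescaling) settles nonnull `Z`. For a null
`Z ≠ 0`, diagonalizability and self-adjointness of `J X` make its eigenspace nondegenerate, so it
contains some `W ⊥ X` with `g Z W ≠ 0`. The duality defect `Y ↦ R X Y Y T - l g(Y,Y) g(X,T)` is a
quadratic form vanishing on every nonnull `a Z + W`, which is all but one value of `a`; a quadratic
in `a` with infinitely many zeros has zero leading coefficient, the defect at `Z`. -/

namespace IsCurv

variable {R : V → V → V → V → ℝ}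

theorem add₂ (hR : IsCurv R) (X Y Y' Z W : V) : R X (Y + Y') Z W = R X Y Z W + R X Y' Z W := by
  simpa using hR.2.1 1 X Y Y' Z W

theorem smul₂ (hR : IsCurv R) (a : ℝ) (X Y Z W : V) : R X (a • Y) Z W = a * R X Y Z W := by
  have hzero : R X 0 Z W = 0 := by simpa using hR.add₂ X 0 0 Z W
  simpa [hzero] using hR.2.1 a X Y 0 Z W

theorem add₃ (hR : IsCurv R) (X Y Z Z' W : V) : R X Y (Z + Z') W = R X Y Z W + R X Y Z' W := by
  simpa using hR.2.2.1 1 X Y Z Z' W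

theorem smul₃ (hR : IsCurv R) (a : ℝ) (X Y Z W : V) : R X Y (a • Z) W = a * R X Y Z W := by
  have hzero : R X Y 0 W = 0 := by simpa using hR.add₃ X Y 0 0 W
  simpa [hzero] using hR.2.2.1 a X Y Z 0 W

theorem swap₁₂ (hR : IsCurv R) (X Y Z W : V) : R X Y Z W = -R Y X Z W :=
  hR.2.2.2.2.1 X Y Z W

theorem swap₃₄ (hR : IsCurv R) (X Y Z W : V) : R X Y Z W = -R X Y W Z :=
  hR.2.2.2.2.2.1 X Y Z W

theorem pair_comm (hR : IsCurv R) (X Y Z W : V) : R X Y Z W = R Z W X Y :=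
  hR.2.2.2.2.2.2.1 X Y Z W

theorem apply_self_left (hR : IsCurv R) (X Z W : V) : R X X Z W = 0 := by
  linarith [hR.swap₁₂ X X Z W]

def middleBilin (hR : IsCurv R) (X T : V) : LinearMap.BilinForm ℝ V :=
  LinearMap.mk₂ ℝ (fun Y Z => R X Y Z T) (fun Y Y' Z => hR.add₂ X Y Y' Z T)
    (fun a Y Z => hR.smul₂ a X Y Z T) (fun Y Z Z' => hR.add₃ X Y Z Z' T)
    (fun a Y Z => hR.smul₃ a X Y Z T)

@[simp]
theorem middleBilin_apply (hR : IsCurv R) (X T Y Z : V) : hR.middleBilin X T Y Z = R X Y Z T :=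
  rfl

end IsCurv

theorem exists_smul_unit {g : V →ₗ[ℝ] V →ₗ[ℝ] ℝ} {v : V} (hv : g v v ≠ 0) :
    ∃ c : ℝ, c ≠ 0 ∧ (g (c • v) (c • v) = 1 ∨ g (c • v) (c • v) = -1) := by
  have hs : 0 < √|g v v| := Real.sqrt_pos.mpr (abs_pos.mpr hv)
  refine ⟨(√|g v v|)⁻¹, inv_ne_zero hs.ne', ?_⟩
  have hcc : (√|g v v|)⁻¹ * (√|g v v|)⁻¹ = |g v v|⁻¹ := by
    rw [← mul_inv, Real.mul_self_sqrt (abs_nonneg _)]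
  simp only [map_smul, LinearMap.smul_apply, smul_eq_mul, ← mul_assoc, hcc]
  rcases hv.lt_or_gt with hneg | hpos
  · right; rw [abs_of_neg hneg]; field_simp
  · left; rw [abs_of_pos hpos]; field_simp

theorem LinearMap.BilinForm.apply_self_eq_zero_of_isNull {B g : LinearMap.BilinForm ℝ V}
    (hgs : ∀ x y, g x y = g y x) {Z W : V} (hZ : g Z Z = 0) (hZW : g Z W ≠ 0)
    (hB : ∀ a : ℝ, g (a • Z + W) (a • Z + W) ≠ 0 → B (a • Z + W) (a • Z + W) = 0) :
    B Z Z = 0 := by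
  -- `a ↦ g (a • Z + W) (a • Z + W)` is affine with a single root `a₀`; the second difference of
  -- the quadratic `a ↦ B (a • Z + W) (a • Z + W)` at `a₀ + 1, a₀ + 2, a₀ + 3` is `2 B Z Z`.
  set a₀ := -g W W / (2 * g Z W)
  have hq : ∀ a : ℝ, B (a • Z + W) (a • Z + W) = a ^ 2 * B Z Z + a * (B Z W + B W Z) + B W W := by
    intro a
    simp only [map_add, map_smul, LinearMap.add_apply, LinearMap.smul_apply, smul_eq_mul]
    ring
  have hvanish : ∀ k : ℝ, k ≠ 0 → B ((a₀ + k) • Z + W) ((a₀ + k) • Z + W) = 0 := by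
    intro k hk
    refine hB _ ?_
    have hε : g ((a₀ + k) • Z + W) ((a₀ + k) • Z + W) = 2 * k * g Z W := by
      simp only [map_add, map_smul, LinearMap.add_apply, LinearMap.smul_apply, smul_eq_mul, hZ,
        hgs W Z, a₀]
      field_simp
      ring
    rw [hε]
    exact mul_ne_zero (mul_ne_zero two_ne_zero hk) hZW
  have h1 := hvanish 1 one_ne_zero
  have h2 := hvanish 2 two_ne_zero
  have h3 := hvanish 3 three_ne_zero
  rw [hq] at h1 h2 h3
  linear_combination (h3 - 2 * h2 + h1) / 2

theorem IsDiagonalizable.exists_mem_eigenspace_apply_ne_zero {f : V →ₗ[ℝ] V}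
    (hf : IsDiagonalizable f) {g : V →ₗ[ℝ] V →ₗ[ℝ] ℝ} (hg : g.SeparatingLeft)
    (hsa : g.IsSelfAdjoint f) {μ : ℝ} {Z : V} (hZ : f Z = μ • Z) (hZ0 : Z ≠ 0) :
    ∃ e, f e = μ • e ∧ g Z e ≠ 0 := by
  obtain ⟨v, hv⟩ : ∃ v, g Z v ≠ 0 := by
    by_contra! h
    exact hZ0 (hg Z h)
  -- the other eigenspaces are `g`-orthogonal to `Z`
  have hle : (⨆ ν : ℝ, Module.End.eigenspace f ν) ≤
      Module.End.eigenspace f μ ⊔ LinearMap.ker (g Z) := by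
    refine iSup_le fun ν => ?_
    by_cases hν : ν = μ
    · subst hν; exact le_sup_left
    intro w hw
    refine Submodule.mem_sup_right (LinearMap.mem_ker.mpr ?_)
    have hw' : f w = ν • w := Module.End.mem_eigenspace_iff.mp hw
    have h : (ν - μ) * g Z w = 0 := by
      have := hsa Z w
      rw [hZ, hw', map_smul, map_smul, LinearMap.smul_apply, smul_eq_mul, smul_eq_mul] at this
      linear_combination -this
    exact (mul_eq_zero.mp h).resolve_left (sub_ne_zero.mpr hν)
  have hv_mem := hle (hf ▸ Submodule.mem_top (x := v))
  obtain ⟨e, he, k, hk, rfl⟩ := Submodule.mem_sup.mp hv_mem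
  refine ⟨e, Module.End.mem_eigenspace_iff.mp he, ?_⟩
  rwa [map_add, LinearMap.mem_ker.mp hk, add_zero] at hv

theorem LinearMap.SeparatingLeft.eq_of_forall_apply_eq {g : V →ₗ[ℝ] V →ₗ[ℝ] ℝ}
    (hg : g.SeparatingLeft) {A B : V} (h : ∀ T, g A T = g B T) : A = B :=
  sub_eq_zero.mp (hg _ fun T => by rw [map_sub, LinearMap.sub_apply, h, sub_self])

namespace IsJacobi

variable {g : V →ₗ[ℝ] V →ₗ[ℝ] ℝ} {R : V → V → V → V → ℝ} {J : V → V →ₗ[ℝ] V}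

theorem smul_left (hg : g.SeparatingLeft) (hR : IsCurv R) (hJ : IsJacobi g R J) (c : ℝ)
    (X : V) : J (c • X) = (c * c) • J X := by
  ext Y
  refine hg.eq_of_forall_apply_eq fun T => ?_
  rw [hJ, hR.smul₂, hR.smul₃, LinearMap.smul_apply, map_smul, LinearMap.smul_apply, hJ,
    smul_eq_mul]
  ring

theorem zero_left (hg : g.SeparatingLeft) (hR : IsCurv R) (hJ : IsJacobi g R J) (X : V) :
    J 0 X = 0 := by
  simpa using congrArg (· X) (hJ.smul_left hg hR 0 X)

theorem apply_self (hg : g.SeparatingLeft) (hR : IsCurv R) (hJ : IsJacobi g R J) (X : V) :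
    J X X = 0 :=
  hg.eq_of_forall_apply_eq fun T => by rw [hJ, hR.apply_self_left, map_zero, LinearMap.zero_apply]

theorem apply_apply_self (hR : IsCurv R) (hJ : IsJacobi g R J) (X Y : V) : g (J X Y) X = 0 := by
  rw [hJ]
  linarith [hR.swap₃₄ Y X X X]

theorem isSelfAdjoint (hgs : ∀ x y, g x y = g y x) (hR : IsCurv R) (hJ : IsJacobi g R J)
    (X : V) : g.IsSelfAdjoint (J X) := fun Y Z => by
  rw [hgs Y, hJ, hJ]
  linarith [hR.pair_comm Y X X Z, hR.swap₁₂ X Z Y X, hR.swap₃₄ Z X X Y]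

theorem mul_apply_eq_zero_of_apply_eq_smul (hR : IsCurv R) (hJ : IsJacobi g R J) {X Y : V}
    {μ : ℝ} (h : J X Y = μ • Y) : μ * g Y X = 0 := by
  simpa [h] using hJ.apply_apply_self hR X Y

theorem apply_sub_smul_self (hg : g.SeparatingLeft) (hR : IsCurv R) (hJ : IsJacobi g R J)
    {X Y : V} {μ c : ℝ} (h : J X Y = μ • Y) (hμc : μ * c = 0) :
    J X (Y - c • X) = μ • (Y - c • X) := by
  rw [map_sub, map_smul, h, hJ.apply_self hg hR, smul_sub, smul_smul μ, hμc]
  simp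

theorem add_smul_left_apply (hg : g.SeparatingLeft) (hR : IsCurv R) (hJ : IsJacobi g R J)
    (a : ℝ) (X Y : V) : J (Y + a • X) X = J Y X - a • J X Y :=
  hg.eq_of_forall_apply_eq fun T => by
    rw [map_sub, LinearMap.sub_apply, map_smul, LinearMap.smul_apply, hJ, hJ, hJ]
    simp only [hR.add₂, hR.add₃, hR.smul₂, hR.smul₃, hR.apply_self_left, smul_eq_mul]
    linear_combination a * hR.swap₁₂ X Y X T

theorem apply_eq_smul_iff (hg : g.SeparatingLeft) (hJ : IsJacobi g R J) (X Y : V) (k : ℝ) :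
    J Y X = k • X ↔ ∀ T, R X Y Y T = k * g X T := by
  refine ⟨fun h T => ?_, fun h => hg.eq_of_forall_apply_eq fun T => ?_⟩
  · rw [← hJ, h, map_smul, LinearMap.smul_apply, smul_eq_mul]
  · rw [hJ, h, map_smul, LinearMap.smul_apply, smul_eq_mul]

theorem smul_left_apply_eq_smul_iff (hg : g.SeparatingLeft) (hR : IsCurv R)
    (hJ : IsJacobi g R J) {c : ℝ} (hc : c ≠ 0) (A B : V) (l : ℝ) :
    J (c • A) B = (g (c • A) (c • A) * l) • B ↔ J A B = (g A A * l) • B := by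
  have hε : g (c • A) (c • A) * l = (c * c) * (g A A * l) := by
    simp only [map_smul, LinearMap.smul_apply, smul_eq_mul]
    ring
  rw [hJ.smul_left hg hR, LinearMap.smul_apply, hε, ← smul_smul (c * c) (g A A * l) B,
    smul_right_inj (mul_ne_zero hc hc)]

theorem exists_orthogonal_eigenvector_pairing (hgs : ∀ x y, g x y = g y x)
    (hg : g.SeparatingLeft) (hR : IsCurv R) (hJ : IsJacobi g R J) {X Z : V} {μ : ℝ}
    (hdiag : IsDiagonalizable (J X)) (hX : g X X ≠ 0) (hZ : J X Z = μ • Z) (hXZ : g X Z = 0)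
    (hZ0 : Z ≠ 0) : ∃ W, J X W = μ • W ∧ g X W = 0 ∧ g Z W ≠ 0 := by
  obtain ⟨e, he, hZe⟩ :=
    hdiag.exists_mem_eigenspace_apply_ne_zero hg (hJ.isSelfAdjoint hgs hR X) hZ hZ0
  have hμ : μ * (g X e / g X X) = 0 := by
    rw [hgs X e, mul_div_assoc', hJ.mul_apply_eq_zero_of_apply_eq_smul hR he, zero_div]
  refine ⟨e - (g X e / g X X) • X, hJ.apply_sub_smul_self hg hR he hμ, ?_, ?_⟩
  · rw [map_sub, map_smul, smul_eq_mul, div_mul_cancel₀ _ hX, sub_self]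
  · rwa [map_sub, map_smul, hgs Z X, hXZ, smul_zero, sub_zero]

end IsJacobi

namespace WeakJacobiDual

variable {g : V →ₗ[ℝ] V →ₗ[ℝ] ℝ} {R : V → V → V → V → ℝ} {J : V → V →ₗ[ℝ] V}

theorem apply_eq_of_nonnull (hw : WeakJacobiDual g J) (hg : g.SeparatingLeft) (hR : IsCurv R)
    (hJ : IsJacobi g R J) {X Y : V} {l : ℝ} (hX : g X X = 1 ∨ g X X = -1) (hY : g Y Y ≠ 0)
    (hXY : g X Y = 0) (h : J X Y = (g X X * l) • Y) : J Y X = (g Y Y * l) • X := by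
  obtain ⟨c, hc, hcY⟩ := exists_smul_unit hY
  refine (hJ.smul_left_apply_eq_smul_iff hg hR hc Y X l).mp (hw X (c • Y) l hX hcY ?_ ?_)
  · rw [map_smul, hXY, smul_zero]
  · rw [map_smul, h, smul_comm]

theorem apply_eq_of_orthogonal (hw : WeakJacobiDual g J) (hdiag : JacobiDiagonalizable g J)
    (hgs : ∀ x y, g x y = g y x) (hg : g.SeparatingLeft) (hR : IsCurv R) (hJ : IsJacobi g R J)
    {X Z : V} {l : ℝ} (hX : g X X = 1 ∨ g X X = -1) (hXZ : g X Z = 0)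
    (h : J X Z = (g X X * l) • Z) : J Z X = (g Z Z * l) • X := by
  by_cases hZ0 : Z = 0
  · subst hZ0
    simp [hJ.zero_left hg hR]
  obtain hZZ | hZZ := ne_or_eq (g Z Z) 0
  · exact hw.apply_eq_of_nonnull hg hR hJ hX hZZ hXZ h
  have hXX : g X X ≠ 0 := by rcases hX with hX | hX <;> simp [hX]
  obtain ⟨W, hW, hXW, hZW⟩ :=
    hJ.exists_orthogonal_eigenvector_pairing hgs hg hR (hdiag X hXX) hXX h hXZ hZ0
  refine (hJ.apply_eq_smul_iff hg X Z _).mpr fun T => ?_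
  have key := LinearMap.BilinForm.apply_self_eq_zero_of_isNull
    (B := hR.middleBilin X T - (l * g X T) • g) hgs hZZ hZW fun a ha => by
      have hY : J X (a • Z + W) = (g X X * l) • (a • Z + W) := by
        rw [map_add, map_smul, h, hW, smul_add, smul_comm a]
      have hXY : g X (a • Z + W) = 0 := by simp [hXZ, hXW]
      have hdual := (hJ.apply_eq_smul_iff hg X _ _).mp
        (hw.apply_eq_of_nonnull hg hR hJ hX ha hXY hY) T
      simp only [LinearMap.sub_apply, LinearMap.smul_apply, IsCurv.middleBilin_apply, hdual,
        smul_eq_mul]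
      ring
  simp only [LinearMap.sub_apply, LinearMap.smul_apply, IsCurv.middleBilin_apply, hZZ,
    smul_eq_mul] at key
  rw [hZZ]
  linarith

theorem apply_eq_of_unit (hw : WeakJacobiDual g J) (hdiag : JacobiDiagonalizable g J)
    (hgs : ∀ x y, g x y = g y x) (hg : g.SeparatingLeft) (hR : IsCurv R) (hJ : IsJacobi g R J)
    {X Y : V} {l : ℝ} (hX : g X X = 1 ∨ g X X = -1) (h : J X Y = (g X X * l) • Y) :
    J Y X = (g Y Y * l) • X := by
  have hXX : g X X ≠ 0 := by rcases hX with hX | hX <;> simp [hX]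
  have hμa : g X X * l * (g X Y / g X X) = 0 := by
    rw [mul_div_assoc', ← hgs Y X, hJ.mul_apply_eq_zero_of_apply_eq_smul hR h, zero_div]
  set a := g X Y / g X X
  set Z := Y - a • X with hZ_def
  have hXZ : g X Z = 0 := by
    rw [hZ_def, map_sub, map_smul, smul_eq_mul, div_mul_cancel₀ _ hXX, sub_self]
  have hZ := hJ.apply_sub_smul_self hg hR h hμa
  have hdual := hw.apply_eq_of_orthogonal hdiag hgs hg hR hJ hX hXZ hZ
  have hYZ : Y = Z + a • X := (sub_add_cancel Y _).symm
  have hε : g Y Y * l = g Z Z * l := by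
    rw [hYZ]
    simp only [map_add, map_smul, LinearMap.add_apply, LinearMap.smul_apply, smul_eq_mul, hXZ,
      hgs Z X]
    linear_combination a * hμa
  rw [hε, hYZ, hJ.add_smul_left_apply hg hR, hdual, hZ, smul_smul, mul_comm a, hμa, zero_smul,
    sub_zero]

end WeakJacobiDual

theorem stmt_9_general {V : Type*} [AddCommGroup V] [Module ℝ V]
(g : V →ₗ[ℝ] V →ₗ[ℝ] ℝ) (hgsymm : ∀ x y : V, g x y = g y x)
    (hgnd : ∀ x : V, (∀ y : V, g x y = 0) → x = 0)
    (R : V → V → V → V → ℝ) (hR : IsCurv R)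
    (J : V → V →ₗ[ℝ] V) (hJ : IsJacobi g R J)
    (hdiag : JacobiDiagonalizable g J) :
    JacobiDual g J ↔ WeakJacobiDual g J := by
  refine ⟨fun hd X Y l hX _ _ => hd X Y l (by rcases hX with hX | hX <;> simp [hX]),
    fun hw X Y l hX h => ?_⟩
  obtain ⟨c, hc, hcX⟩ := exists_smul_unit hX
  have hcXY : J (c • X) Y = (g (c • X) (c • X) * l) • Y :=
    (hJ.smul_left_apply_eq_smul_iff hgnd hR hc X Y l).mpr h
  have hdual := hw.apply_eq_of_unit hdiag hgsymm hgnd hR hJ hcX hcXY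
  rwa [map_smul, smul_comm, smul_right_inj hc] at hdual

/-- a Jacobi-diagonalizable algebraic curvature tensor is Jacobi-dual iff it
is weak Jacobi-dual. -/
theorem stmt_9 {V : Type*} [AddCommGroup V] [Module ℝ V] [FiniteDimensional ℝ V]
(g : V →ₗ[ℝ] V →ₗ[ℝ] ℝ) (hgsymm : ∀ x y : V, g x y = g y x)
    (hgnd : ∀ x : V, (∀ y : V, g x y = 0) → x = 0)
    (R : V → V → V → V → ℝ) (hR : IsCurv R)
    (J : V → V →ₗ[ℝ] V) (hJ : IsJacobi g R J)
    (hdiag : JacobiDiagonalizable g J) :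
    JacobiDual g J ↔ WeakJacobiDual g J :=
  stmt_9_general g hgsymm hgnd R hR J hJ hdiag
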